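/- arXiv:1801.08017 — 2 statements merged into one kernel-verified Lean document; each statement's English description precedes it below -/
import Mathlib

section
/- Let $j \in \mathbb{N}$, let $q \in (0,1)$ be a real number, and let $\alpha, x, y, z \in \mathbb{R}$ be such that none of the real numbers $\alpha-y-j+1+i$, $\alpha-x-j+1+i$, $y+i$, $x+i$, $x+z+i$ (for $i = 0,1,\dots,j-1$) equals $0$. Then $$\sum_{u=0}^{j} \frac{(q^{-j};q)_u\,(q^{\alpha};q)_u\,(q^{\alpha+z};q)_u}{(q;q)_u\,(q^{\alpha-y-j+1};q)_u\,(q^{\alpha-x-j+1};q)_u}\, q^u = \frac{(q^{-y-j+1};q)_j\,(q^{-x-j+1};q)_j\,(q^{-x-z-j+1};q)_j}{(q^{\alpha-y-j+1};q)_j\,(q^{\alpha-x-j+1};q)_j\,(q^{y};q)_j}\, q^{(\alpha+x+y+z+j-1)j} \sum_{u=0}^{j} \frac{(q^{-j};q)_u\,(q^{x+y+z+j-1};q)_u\,(q^{x-\alpha};q)_u}{(q;q)_u\,(q^{x};q)_u\,(q^{x+z};q)_u}\, q^{(1+\alpha-y)u}.$$ (This is the terminating-series form of the ${}_3\phi_2$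 transformation of the paper's Lemma on hypergeometric series; since the upper parameter is $q^{-j}$, both hypergeometric series terminate after $j+1$ terms.) -/
open Finset

namespace ThreePhiTwo

variable {q : ℝ}

/-- exponent-form q-Pochhammer: `Pf q t n = ∏_{i<n} (1 - q^(t+i))` (rpow). -/
noncomputable def Pf (q : ℝ) (t : ℝ) (n : ℕ) : ℝ := ∏ i ∈ range n, (1 - q ^ (t + (i : ℝ)))

lemma Pf_zero (t : ℝ) : Pf q t 0 = 1 := by simp [Pf]

lemma Pf_succ (t : ℝ) (n : ℕ) : Pf q t (n + 1) = Pf q t n * (1 - q ^ (t + (n : ℝ))) := by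
  simp [Pf, prod_range_succ]

lemma Pf_one (t : ℝ) : Pf q t 1 = 1 - q ^ t := by
  simp [Pf]

lemma Pf_succ' (t : ℝ) (n : ℕ) : Pf q t (n + 1) = (1 - q ^ t) * Pf q (t + 1) n := by
  rw [Pf, prod_range_succ']
  rw [show (1 : ℝ) - q ^ (t + (0:ℕ)) = 1 - q ^ t by norm_num, mul_comm]
  congr 1
  refine prod_congr rfl fun i _ => ?_
  congr 1
  push_cast; ring

lemma Pf_add (t : ℝ) (m n : ℕ) : Pf q t (m + n) = Pf q t m * Pf q (t + (m : ℝ)) n := by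
  rw [Pf, prod_range_add]
  congr 1
  refine prod_congr rfl fun i _ => ?_
  congr 1
  push_cast; ring

lemma Pf_reverse (hq0 : 0 < q) (t : ℝ) (n : ℕ) :
    Pf q t n = (-1) ^ n * q ^ ((n : ℝ) * t + (n : ℝ) * ((n : ℝ) - 1) / 2) *
      Pf q (1 - t - (n : ℝ)) n := by
  induction n with
  | zero => simp [Pf]
  | succ n ih =>
    have hcast : (1 : ℝ) - t - ((n + 1 : ℕ) : ℝ) = -t - n := by push_cast; ring
    rw [Pf_succ, ih, hcast, Pf_succ' (-t - (n:ℝ)) n,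
      show (-t - (n:ℝ) + 1 : ℝ) = 1 - t - (n:ℝ) by ring]
    have hmerge : q ^ ((n:ℝ) * t + (n:ℝ) * ((n:ℝ) - 1) / 2) * q ^ (t + (n:ℝ)) =
        q ^ (((n+1 : ℕ) : ℝ) * t + ((n+1:ℕ) : ℝ) * (((n+1:ℕ) : ℝ) - 1) / 2) := by
      rw [← Real.rpow_add hq0]
      congr 1
      push_cast; ring
    have hone : q ^ (t + (n:ℝ)) * q ^ (-t - (n:ℝ)) = 1 := by
      rw [← Real.rpow_add hq0, show t + (n:ℝ) + (-t - (n:ℝ)) = 0 by ring, Real.rpow_zero]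
    rw [pow_succ]
    linear_combination (-1:ℝ)^n * Pf q (1 - t - (n:ℝ)) n * (q ^ (-t - (n:ℝ)) - 1) * hmerge
      - (-1:ℝ)^n * Pf q (1 - t - (n:ℝ)) n *
          q ^ ((n:ℝ) * t + (n:ℝ) * ((n:ℝ) - 1) / 2) * hone

section
variable (hq0 : 0 < q) (hq1 : q < 1)
include hq0 hq1

lemma qpow_eq_one_iff {t : ℝ} : q ^ t = 1 ↔ t = 0 := by
  constructor
  · intro h
    rw [Real.rpow_def_of_pos hq0, ← Real.exp_zero] at h
    have := Real.exp_injective h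
    rcases mul_eq_zero.1 this with h' | h'
    · exact absurd h' (Real.log_ne_zero_of_pos_of_ne_one hq0 hq1.ne)
    · exact h'
  · rintro rfl; exact Real.rpow_zero q

lemma Pf_ne_zero {t : ℝ} {n : ℕ} (h : ∀ i : ℕ, i < n → t + (i : ℝ) ≠ 0) :
    Pf q t n ≠ 0 := by
  refine prod_ne_zero_iff.2 fun i hi => ?_
  rw [sub_ne_zero]
  intro hcon
  exact h i (mem_range.1 hi) ((qpow_eq_one_iff hq0 hq1).1 hcon.symm)

lemma Pf_one_ne_zero (n : ℕ) : Pf q 1 n ≠ 0 := by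
  refine Pf_ne_zero hq0 hq1 fun i _ => ?_
  positivity

end

/-- Gaussian binomial coefficient (for real `q`), via the Pascal recursion. -/
noncomputable def gb (q : ℝ) : ℕ → ℕ → ℝ
  | 0, 0 => 1
  | 0, _ + 1 => 0
  | m + 1, 0 => gb q m 0
  | m + 1, k + 1 => gb q m (k + 1) + q ^ ((m : ℝ) - (k : ℝ)) * gb q m k

@[simp] lemma gb_zero (m : ℕ) : gb q m 0 = 1 := by
  induction m with
  | zero => rfl
  | succ m ih => rw [gb, ih]

lemma gb_of_lt : ∀ {m k : ℕ}, m < k → gb q m k = 0 := by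
  intro m
  induction m with
  | zero => intro k hk; match k, hk with
    | k + 1, _ => rfl
  | succ m ih =>
    intro k hk
    match k, hk with
    | k + 1, hk =>
      rw [gb, ih (by omega), ih (by omega)]
      ring

section
variable (hq0 : 0 < q) (hq1 : q < 1)
include hq0 hq1

lemma gb_mul {m k : ℕ} (hk : k ≤ m) :
    gb q m k * (Pf q 1 k * Pf q 1 (m - k)) = Pf q 1 m := by
  induction m generalizing k with
  | zero =>
    interval_cases k
    simp [Pf_zero]
  | succ m ih =>
    match k with
    | 0 => simp [Pf_zero]
    | k + 1 =>
      rcases Nat.lt_or_ge k m with hkm | hkm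
      · -- k + 1 ≤ m
        have e1 : m + 1 - (k + 1) = (m - k - 1) + 1 := by omega
        have e2 : m - (k + 1) = m - k - 1 := by omega
        rw [gb, add_mul, e1, Pf_succ 1 (m - k - 1), Pf_succ 1 k]
        have hA := ih (show k + 1 ≤ m by omega)
        rw [Pf_succ 1 k] at hA
        have hB := ih (show k ≤ m from hkm.le)
        rw [e2] at hA
        have e3 : m - k = (m - k - 1) + 1 := by omega
        rw [Pf_succ 1 m]
        have e4 : ((m : ℝ) - (k : ℝ)) = 1 + (((m - k - 1 : ℕ)) : ℝ) := by
          have : ((m - k - 1 : ℕ) : ℝ) = (m : ℝ) - k - 1 := by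
            push_cast [Nat.cast_sub hkm.le, Nat.cast_sub (by omega : 1 ≤ m - k)]
            ring
          rw [this]; ring
        have e5 : ((k : ℕ) : ℝ) + 1 = 1 + (k : ℝ) := by ring
        rw [e3, Pf_succ 1 (m - k - 1)] at hB
        -- goal manipulation
        have key : (1 : ℝ) - q ^ (1 + (m:ℝ)) =
            (1 - q ^ (1 + ((m - k - 1 : ℕ) : ℝ))) + q ^ ((m:ℝ) - (k:ℝ)) * (1 - q ^ (1 + (k:ℝ))) := by
          have hm1 : q ^ ((m:ℝ) - (k:ℝ)) * q ^ (1 + (k:ℝ)) = q ^ (1 + (m:ℝ)) := by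
            rw [← Real.rpow_add hq0]; congr 1; ring
          have hm2 : q ^ (1 + ((m - k - 1 : ℕ) : ℝ)) = q ^ ((m:ℝ) - (k:ℝ)) := by
            congr 1
            push_cast [Nat.cast_sub hkm.le, Nat.cast_sub (by omega : 1 ≤ m - k)]
            ring
          rw [hm2]
          linear_combination hm1
        rw [key]
        linear_combination (1 - q ^ (1 + ((m - k - 1:ℕ) : ℝ))) * hA
          + q ^ ((m:ℝ) - (k:ℝ)) * (1 - q ^ (1 + (k:ℝ))) * hB
      · -- k + 1 = m + 1
        have hk1 : k = m := by omega
        subst hk1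
        rw [gb, gb_of_lt (Nat.lt_succ_self k)]
        have hthis := ih (le_refl k)
        simp only [Nat.sub_self, Pf_zero, mul_one] at hthis ⊢
        have hne := Pf_one_ne_zero hq0 hq1 k
        have hgb : gb q k k = 1 :=
          mul_right_cancel₀ hne (by rw [one_mul]; exact hthis)
        rw [hgb, show (k:ℝ) - (k:ℝ) = 0 by ring, Real.rpow_zero]
        ring

end



section
variable (hq0 : 0 < q) (hq1 : q < 1)
include hq0 hq1

lemma gb_diag (m : ℕ) : gb q m m = 1 := by
  have h := gb_mul hq0 hq1 (le_refl m)
  simp only [Nat.sub_self, Pf_zero, mul_one] at h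
  exact mul_right_cancel₀ (Pf_one_ne_zero hq0 hq1 m) (by rw [one_mul]; exact h)

lemma gb_pascal2 (m k : ℕ) :
    gb q (m + 1) (k + 1) = q ^ ((k : ℝ) + 1) * gb q m (k + 1) + gb q m k := by
  rcases Nat.lt_or_ge m k with hmk | hmk
  · rw [gb_of_lt (by omega), gb_of_lt (by omega), gb_of_lt (by omega)]
    ring
  · rcases Nat.eq_or_lt_of_le hmk with hkm | hkm
    · subst hkm
      rw [gb_of_lt (Nat.lt_succ_self k), gb_diag hq0 hq1, gb_diag hq0 hq1]
      ring
    · -- k < m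
      refine mul_right_cancel₀ (b := Pf q 1 (k+1) * Pf q 1 (m - k))
        (by exact mul_ne_zero (Pf_one_ne_zero hq0 hq1 _) (Pf_one_ne_zero hq0 hq1 _)) ?_
      have hL : gb q (m+1) (k+1) * (Pf q 1 (k+1) * Pf q 1 (m - k)) = Pf q 1 (m+1) := by
        have := gb_mul hq0 hq1 (show k + 1 ≤ m + 1 by omega)
        rwa [show m + 1 - (k+1) = m - k by omega] at this
      rw [hL, add_mul]
      have e3 : m - k = (m - k - 1) + 1 := by omega
      have hA : gb q m (k+1) * (Pf q 1 (k+1) * Pf q 1 (m - k - 1)) = Pf q 1 m := by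
        have := gb_mul hq0 hq1 (show k + 1 ≤ m by omega)
        rwa [show m - (k+1) = m - k - 1 by omega] at this
      have hB : gb q m k * (Pf q 1 k * Pf q 1 (m - k)) = Pf q 1 m :=
        gb_mul hq0 hq1 (le_of_lt hkm)
      rw [e3, Pf_succ 1 (m - k - 1), Pf_succ 1 k, Pf_succ 1 m]
      have hmk1 : (1 : ℝ) + ((m - k - 1 : ℕ) : ℝ) = (m : ℝ) - (k : ℝ) := by
        push_cast [Nat.cast_sub hmk, Nat.cast_sub (by omega : 1 ≤ m - k)]
        ring
      have hca : q ^ ((k:ℝ) + 1) = q ^ (1 + (k:ℝ)) := by congr 1; ring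
      have hmerge : q ^ (1 + (k:ℝ)) * q ^ ((m:ℝ) - (k:ℝ)) = q ^ (1 + (m:ℝ)) := by
        rw [← Real.rpow_add hq0]; congr 1; ring
      rw [hmk1, hca]
      rw [Pf_succ 1 k] at hA
      rw [e3, Pf_succ 1 (m - k - 1), hmk1] at hB
      linear_combination -(q ^ (1 + (k:ℝ)) * (1 - q ^ ((m:ℝ) - (k:ℝ))) * hA)
        - (1 - q ^ (1 + (k:ℝ))) * hB + Pf q 1 m * hmerge

lemma Pf_neg_nat {m t : ℕ} (ht : t ≤ m) :
    Pf q (-(m : ℝ)) t =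
      (-1) ^ t * q ^ ((t:ℝ) * ((t:ℝ) - 1) / 2 - (m:ℝ) * (t:ℝ)) * (gb q m t * Pf q 1 t) := by
  have hrev := Pf_reverse hq0 (-(m : ℝ)) t
  rw [show (1 : ℝ) - -(m:ℝ) - (t:ℝ) = 1 + ((m - t : ℕ) : ℝ) by
    push_cast [Nat.cast_sub ht]; ring] at hrev
  have hsplit : Pf q 1 (m - t) * Pf q (1 + ((m - t : ℕ) : ℝ)) t = Pf q 1 m := by
    rw [← Pf_add, Nat.sub_add_cancel ht]
  have hgb := gb_mul hq0 hq1 ht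
  have hPf : Pf q (1 + ((m - t : ℕ) : ℝ)) t = gb q m t * Pf q 1 t := by
    refine mul_left_cancel₀ (Pf_one_ne_zero hq0 hq1 (m - t)) ?_
    rw [hsplit, ← hgb]; ring
  rw [hrev, hPf]
  congr 2
  ring

end

/-- summand of the (cleared) q-Chu-Vandermonde sum, argument `q` version -/
noncomputable def v1t (q σ τ : ℝ) (m k : ℕ) : ℝ :=
  gb q m k * (-1) ^ k * q ^ ((k:ℝ) * ((k:ℝ) - 1) / 2 + (1 - (m:ℝ)) * (k:ℝ)) *
    Pf q τ k * Pf q (σ + (k:ℝ)) (m - k)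

lemma v1t_zero (σ τ : ℝ) (m : ℕ) : v1t q σ τ m 0 = Pf q σ m := by
  simp [v1t, Pf_zero]

lemma v1t_top (hq0 : 0 < q) (hq1 : q < 1) (σ τ : ℝ) (m : ℕ) : v1t q σ τ m (m + 1) = 0 := by
  simp [v1t, gb_of_lt (Nat.lt_succ_self m)]

lemma V1c (hq0 : 0 < q) (hq1 : q < 1) (m : ℕ) :
    ∀ σ τ : ℝ, ∑ k ∈ range (m + 1), v1t q σ τ m k = q ^ (τ * (m:ℝ)) * Pf q (σ - τ) m := by
  induction m with
  | zero =>
    intro σ τ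
    simp [v1t, Pf]
  | succ m ih =>
    intro σ τ
    rw [Finset.sum_range_succ']
    have hterm : ∀ k ∈ range (m + 1), v1t q σ τ (m+1) (k+1)
        = (1 - q ^ (σ + (m:ℝ))) * v1t q σ τ m (k+1)
          - ((1 - q ^ τ) * q ^ (-(m:ℝ))) * v1t q (σ+1) (τ+1) m k := by
      intro k hk
      have hk' : k ≤ m := by simpa using Nat.lt_succ_iff.1 (mem_range.1 hk)
      simp only [v1t, gb_pascal2 hq0 hq1, Nat.succ_sub_succ]
      have hτs : Pf q τ (k+1) = (1 - q ^ τ) * Pf q (τ + 1) k := Pf_succ' τ k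
      push_cast
      have hArg : Pf q (σ + 1 + (k:ℝ)) (m - k) = Pf q (σ + ((k:ℝ) + 1)) (m - k) := by
        congr 1; ring
      have h1 : q ^ ((k:ℝ) + 1) * q ^ (((k:ℝ)+1) * ((k:ℝ)+1-1) / 2 + (1 - ((m:ℝ)+1)) * ((k:ℝ)+1))
          = q ^ (((k:ℝ)+1) * ((k:ℝ)+1-1) / 2 + (1 - (m:ℝ)) * ((k:ℝ)+1)) := by
        rw [← Real.rpow_add hq0]; congr 1; ring
      have h2 : q ^ (((k:ℝ)+1) * ((k:ℝ)+1-1) / 2 + (1 - ((m:ℝ)+1)) * ((k:ℝ)+1))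
          = q ^ ((k:ℝ) * ((k:ℝ)-1) / 2 + (1 - (m:ℝ)) * (k:ℝ)) * q ^ (-(m:ℝ)) := by
        rw [← Real.rpow_add hq0]; congr 1; ring
      rw [hτs, hArg]
      rcases Nat.lt_or_ge k m with hkm | hkm
      · have hsp : Pf q (σ + ((k:ℝ) + 1)) (m - k)
            = Pf q (σ + ((k:ℝ) + 1)) (m - (k+1)) * (1 - q ^ (σ + (m:ℝ))) := by
          rw [show m - k = (m - (k+1)) + 1 by omega, Pf_succ]
          congr 2
          push_cast [Nat.cast_sub (show k + 1 ≤ m by omega)]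
          ring
        rw [hsp]
        linear_combination ((-1:ℝ)^(k+1) * (1 - q ^ τ) * Pf q (τ+1) k *
            Pf q (σ + ((k:ℝ)+1)) (m - (k+1)) * (1 - q ^ (σ + (m:ℝ))) * gb q m (k+1)) * h1
          + ((-1:ℝ)^(k+1) * (1 - q ^ τ) * Pf q (τ+1) k *
            Pf q (σ + ((k:ℝ)+1)) (m - (k+1)) * (1 - q ^ (σ + (m:ℝ))) * gb q m k) * h2
      · have hkm' : k = m := by omega
        subst hkm'
        rw [gb_of_lt (Nat.lt_succ_self k), Nat.sub_self, Pf_zero,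
          show k - (k+1) = 0 by omega, Pf_zero]
        linear_combination ((-1:ℝ)^(k+1) * (1 - q ^ τ) * Pf q (τ+1) k * gb q k k) * h2
    rw [Finset.sum_congr rfl hterm, Finset.sum_sub_distrib, ← Finset.mul_sum, ← Finset.mul_sum]
    have hshift : ∑ k ∈ range (m+1), v1t q σ τ m (k+1)
        = q ^ (τ * (m:ℝ)) * Pf q (σ - τ) m - Pf q σ m := by
      have hs1 := Finset.sum_range_succ' (v1t q σ τ m) (m+1)
      have hs2 := Finset.sum_range_succ (v1t q σ τ m) (m+1)
      rw [hs2, ih σ τ, v1t_top hq0 hq1, v1t_zero] at hs1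
      linarith [hs1]
    rw [hshift, ih (σ+1) (τ+1), v1t_zero, show σ + 1 - (τ+1) = σ - τ by ring,
      Pf_succ σ m, Pf_succ (σ - τ) m]
    have f1 : q ^ (-(m:ℝ)) * q ^ ((τ+1) * (m:ℝ)) = q ^ (τ * (m:ℝ)) := by
      rw [← Real.rpow_add hq0]; congr 1; ring
    have f2 : q ^ (τ * (((m:ℕ)+1 :ℕ):ℝ)) = q ^ (τ * (m:ℝ)) * q ^ τ := by
      rw [← Real.rpow_add hq0]; congr 1; push_cast; ring
    have f3 : q ^ τ * q ^ (σ - τ + (m:ℝ)) = q ^ (σ + (m:ℝ)) := by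
      rw [← Real.rpow_add hq0]; congr 1; ring
    linear_combination (-(1 - q ^ τ) * Pf q (σ - τ) m) * f1
      - (Pf q (σ - τ) m * (1 - q ^ (σ - τ + (m:ℝ)))) * f2
      + (Pf q (σ - τ) m * q ^ (τ * (m:ℝ))) * f3

lemma gb_symm (hq0 : 0 < q) (hq1 : q < 1) {m k : ℕ} (hk : k ≤ m) :
    gb q m (m - k) = gb q m k := by
  have h1 := gb_mul hq0 hq1 (Nat.sub_le m k)
  rw [show m - (m - k) = k by omega] at h1
  have h2 := gb_mul hq0 hq1 hk
  refine mul_right_cancel₀ (b := Pf q 1 k * Pf q 1 (m - k))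
    (mul_ne_zero (Pf_one_ne_zero hq0 hq1 _) (Pf_one_ne_zero hq0 hq1 _)) ?_
  rw [h2, ← h1]; ring

/-- summand of the (cleared) q-Chu-Vandermonde sum, argument `c q^m / b` version -/
noncomputable def v2t (q σ τ : ℝ) (m k : ℕ) : ℝ :=
  gb q m k * (-1) ^ k * q ^ ((k:ℝ) * ((k:ℝ) - 1) / 2 + σ * (k:ℝ) + τ * ((m:ℝ) - (k:ℝ))) *
    Pf q τ k * Pf q (σ + (k:ℝ)) (m - k)

lemma v2_reflect (hq0 : 0 < q) (hq1 : q < 1) {m k : ℕ} (hk : k ≤ m) (σ τ : ℝ) :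
    v2t q σ τ m k = q ^ ((m:ℝ) * (σ + τ + (m:ℝ) - 1)) *
      v1t q (1 - τ - (m:ℝ)) (1 - σ - (m:ℝ)) m (m - k) := by
  unfold v2t v1t
  rw [gb_symm hq0 hq1 hk, show m - (m - k) = k by omega]
  rw [Pf_reverse hq0 τ k, Pf_reverse hq0 (σ + (k:ℝ)) (m - k)]
  rw [Nat.cast_sub hk]
  rw [show (1:ℝ) - τ - (k:ℝ) = 1 - τ - (m:ℝ) + ((m:ℝ) - (k:ℝ)) by ring,
    show (1:ℝ) - (σ + (k:ℝ)) - ((m:ℝ) - (k:ℝ)) = 1 - σ - (m:ℝ) by ring]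
  have hsign : ((-1:ℝ)) ^ k * (-1) ^ k = 1 := by
    rw [← pow_add]; exact Even.neg_one_pow ⟨k, rfl⟩
  have hE : q ^ ((k:ℝ) * ((k:ℝ) - 1) / 2 + σ * (k:ℝ) + τ * ((m:ℝ) - (k:ℝ)))
        * (q ^ ((k:ℝ) * τ + (k:ℝ) * ((k:ℝ) - 1) / 2)
        * q ^ (((m:ℝ) - (k:ℝ)) * (σ + (k:ℝ)) + ((m:ℝ) - (k:ℝ)) * (((m:ℝ) - (k:ℝ)) - 1) / 2))
      = q ^ ((m:ℝ) * (σ + τ + (m:ℝ) - 1))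
        * q ^ (((m:ℝ) - (k:ℝ)) * (((m:ℝ) - (k:ℝ)) - 1) / 2 + (1 - (m:ℝ)) * ((m:ℝ) - (k:ℝ))) := by
    rw [← Real.rpow_add hq0, ← Real.rpow_add hq0, ← Real.rpow_add hq0]
    congr 1; ring
  linear_combination (gb q m k * Pf q (1 - τ - (m:ℝ) + ((m:ℝ) - (k:ℝ))) k *
      Pf q (1 - σ - (m:ℝ)) (m - k) * (-1:ℝ)^(m - k) *
      (q ^ ((k:ℝ) * ((k:ℝ) - 1) / 2 + σ * (k:ℝ) + τ * ((m:ℝ) - (k:ℝ)))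
        * (q ^ ((k:ℝ) * τ + (k:ℝ) * ((k:ℝ) - 1) / 2)
        * q ^ (((m:ℝ) - (k:ℝ)) * (σ + (k:ℝ)) + ((m:ℝ) - (k:ℝ)) * (((m:ℝ) - (k:ℝ)) - 1) / 2)))) * hsign
    + (gb q m k * Pf q (1 - τ - (m:ℝ) + ((m:ℝ) - (k:ℝ))) k *
      Pf q (1 - σ - (m:ℝ)) (m - k) * (-1:ℝ)^(m - k)) * hE

lemma V2c (hq0 : 0 < q) (hq1 : q < 1) (m : ℕ) (σ τ : ℝ) :
    ∑ k ∈ range (m + 1), v2t q σ τ m k = q ^ (τ * (m:ℝ)) * Pf q (σ - τ) m := by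
  have h1 : ∀ k ∈ range (m + 1), v2t q σ τ m k = q ^ ((m:ℝ) * (σ + τ + (m:ℝ) - 1)) *
      v1t q (1 - τ - (m:ℝ)) (1 - σ - (m:ℝ)) m (m - k) := fun k hk =>
    v2_reflect hq0 hq1 (Nat.lt_succ_iff.1 (mem_range.1 hk)) σ τ
  rw [Finset.sum_congr rfl h1, ← Finset.mul_sum]
  have h2 := Finset.sum_range_reflect (v1t q (1 - τ - (m:ℝ)) (1 - σ - (m:ℝ)) m) (m + 1)
  simp only [Nat.add_sub_cancel] at h2
  rw [h2, V1c hq0 hq1 m, show (1:ℝ) - τ - (m:ℝ) - (1 - σ - (m:ℝ)) = σ - τ by ring,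
    ← mul_assoc, ← Real.rpow_add hq0, show (m:ℝ) * (σ + τ + (m:ℝ) - 1) + (1 - σ - (m:ℝ)) * (m:ℝ)
      = τ * (m:ℝ) by ring]

lemma tri_swap (n : ℕ) (f : ℕ → ℕ → ℝ) :
    ∑ u ∈ range n, ∑ k ∈ range (u + 1), f u k
      = ∑ k ∈ range n, ∑ t ∈ range (n - k), f (k + t) k := by
  induction n with
  | zero => simp
  | succ n ih =>
    rw [Finset.sum_range_succ, ih, Finset.sum_range_succ (fun k => ∑ t ∈ range (n + 1 - k), f (k+t) k) n]
    rw [Finset.sum_range_succ (f n) n, show n + 1 - n = 1 by omega]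
    rw [Finset.sum_range_one, ← add_assoc]
    have : ∀ k ∈ range n, ∑ t ∈ range (n + 1 - k), f (k+t) k
        = ∑ t ∈ range (n - k), f (k+t) k + f n k := by
      intro k hk
      have hk' := mem_range.1 hk
      rw [show n + 1 - k = (n - k) + 1 by omega, Finset.sum_range_succ,
        show k + (n - k) = n by omega]
    rw [Finset.sum_congr rfl this, Finset.sum_add_distrib]
    norm_num

lemma T1c (hq0 : 0 < q) (hq1 : q < 1) (j : ℕ) (b c d e : ℝ) :
    (∑ u ∈ range (j + 1), Pf q (-(j:ℝ)) u * Pf q b u * Pf q c u / Pf q 1 u * q ^ (u:ℝ)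
        * Pf q (d + (u:ℝ)) (j - u) * Pf q (e + (u:ℝ)) (j - u)) * Pf q (1 + b - d - (j:ℝ)) j
    = Pf q (d - b) j * q ^ (b * (j:ℝ)) *
      ∑ k ∈ range (j + 1), Pf q (-(j:ℝ)) k * Pf q b k * Pf q (e - c) k / Pf q 1 k
        * q ^ ((1 + c - d) * (k:ℝ)) * Pf q (e + (k:ℝ)) (j - k)
        * Pf q (1 + b - d - (j:ℝ) + (k:ℝ)) (j - k) := by
  -- Step 1: expand `Pf q c u` by the q-Chu-Vandermonde V2c
  have hexp : ∀ u ∈ range (j + 1),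
      Pf q (-(j:ℝ)) u * Pf q b u * Pf q c u / Pf q 1 u * q ^ (u:ℝ)
          * Pf q (d + (u:ℝ)) (j - u) * Pf q (e + (u:ℝ)) (j - u)
        = ∑ k ∈ range (u + 1),
            Pf q (-(j:ℝ)) u * Pf q b u / Pf q 1 u * q ^ (u:ℝ)
              * Pf q (d + (u:ℝ)) (j - u) * Pf q (e + (u:ℝ)) (j - u)
              * (q ^ (-((e - c) * (u:ℝ))) * v2t q e (e - c) u k) := by
    intro u _
    rw [← Finset.mul_sum, ← Finset.mul_sum, V2c hq0 hq1 u e (e - c)]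
    rw [show e - (e - c) = c by ring, ← mul_assoc (q ^ (-((e - c) * (u:ℝ)))),
      ← Real.rpow_add hq0, neg_add_cancel, Real.rpow_zero, one_mul]
    ring
  rw [Finset.sum_congr rfl hexp, tri_swap (j + 1)]
  -- Step 4+5: evaluate the inner sum over t via V1c
  have hinner : ∀ k ∈ range (j + 1),
      ∑ t ∈ range (j + 1 - k),
        Pf q (-(j:ℝ)) (k + t) * Pf q b (k + t) / Pf q 1 (k + t) * q ^ ((k + t : ℕ):ℝ)
          * Pf q (d + ((k + t : ℕ):ℝ)) (j - (k + t)) * Pf q (e + ((k + t : ℕ):ℝ)) (j - (k + t))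
          * (q ^ (-((e - c) * ((k + t : ℕ):ℝ))) * v2t q e (e - c) (k + t) k)
      = (Pf q (-(j:ℝ)) k * Pf q b k * Pf q (e - c) k / Pf q 1 k * (-1) ^ k
          * q ^ ((k:ℝ) * ((k:ℝ) - 1) / 2 + (1 + c) * (k:ℝ)) * Pf q (e + (k:ℝ)) (j - k))
        * (q ^ ((b + (k:ℝ)) * (((j - k : ℕ)):ℝ)) * Pf q (d - b) (j - k)) := by
    intro k hk
    have hkj : k ≤ j := Nat.lt_succ_iff.1 (mem_range.1 hk)
    have hterm : ∀ t ∈ range (j + 1 - k),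
        Pf q (-(j:ℝ)) (k + t) * Pf q b (k + t) / Pf q 1 (k + t) * q ^ ((k + t : ℕ):ℝ)
          * Pf q (d + ((k + t : ℕ):ℝ)) (j - (k + t)) * Pf q (e + ((k + t : ℕ):ℝ)) (j - (k + t))
          * (q ^ (-((e - c) * ((k + t : ℕ):ℝ))) * v2t q e (e - c) (k + t) k)
        = (Pf q (-(j:ℝ)) k * Pf q b k * Pf q (e - c) k / Pf q 1 k * (-1) ^ k
            * q ^ ((k:ℝ) * ((k:ℝ) - 1) / 2 + (1 + c) * (k:ℝ)) * Pf q (e + (k:ℝ)) (j - k))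
          * v1t q (d + (k:ℝ)) (b + (k:ℝ)) (j - k) t := by
      intro t ht
      have htk : t ≤ j - k := by have := mem_range.1 ht; omega
      have hR1 : Pf q (-(j:ℝ)) (k + t) = Pf q (-(j:ℝ)) k *
          ((-1)^t * q ^ ((t:ℝ) * ((t:ℝ) - 1) / 2 - ((j:ℝ) - (k:ℝ)) * (t:ℝ)) *
            (gb q (j - k) t * Pf q 1 t)) := by
        rw [Pf_add]
        congr 1
        rw [show -(j:ℝ) + (k:ℝ) = -(((j - k : ℕ)):ℝ) by push_cast [Nat.cast_sub hkj]; ring,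
          Pf_neg_nat hq0 hq1 htk, Nat.cast_sub hkj]
      have hR3 : Pf q b (k + t) = Pf q b k * Pf q (b + (k:ℝ)) t := Pf_add b k t
      have hgb : Pf q 1 (k + t) = gb q (k + t) k * (Pf q 1 k * Pf q 1 t) := by
        rw [← gb_mul hq0 hq1 (Nat.le_add_right k t), show k + t - k = t by omega]
      simp only [v2t, v1t]
      rw [show k + t - k = t by omega, show j - (k + t) = (j - k) - t by omega,
        show d + ((k + t : ℕ):ℝ) = d + (k:ℝ) + (t:ℝ) by push_cast; ring,
        show e + ((k + t : ℕ):ℝ) = e + (k:ℝ) + (t:ℝ) by push_cast; ring,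
        hR1, hR3, Nat.cast_sub hkj]
      have hR6 : Pf q (e + (k:ℝ)) t * Pf q (e + (k:ℝ) + (t:ℝ)) ((j - k) - t)
          = Pf q (e + (k:ℝ)) (j - k) := by
        rw [← Pf_add, show t + ((j - k) - t) = j - k by omega]
      have hfrac : gb q (k + t) k * Pf q 1 t * (Pf q 1 (k + t))⁻¹ = (Pf q 1 k)⁻¹ := by
        rw [hgb]
        have h1 := Pf_one_ne_zero hq0 hq1 k
        have h2 := Pf_one_ne_zero hq0 hq1 t
        have h3 : gb q (k + t) k ≠ 0 := by
          intro h0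
          apply Pf_one_ne_zero hq0 hq1 (k + t)
          rw [hgb, h0, zero_mul]
        field_simp
      have hpow : q ^ (((k + t : ℕ)):ℝ) * q ^ (-((e - c) * ((k + t : ℕ):ℝ)))
            * q ^ ((k:ℝ) * ((k:ℝ) - 1) / 2 + e * (k:ℝ) + (e - c) * (((k + t : ℕ):ℝ) - (k:ℝ)))
            * q ^ ((t:ℝ) * ((t:ℝ) - 1) / 2 - ((j:ℝ) - (k:ℝ)) * (t:ℝ))
          = q ^ ((k:ℝ) * ((k:ℝ) - 1) / 2 + (1 + c) * (k:ℝ))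
            * q ^ ((t:ℝ) * ((t:ℝ) - 1) / 2 + (1 - ((j:ℝ) - (k:ℝ))) * (t:ℝ)) := by
        rw [← Real.rpow_add hq0, ← Real.rpow_add hq0, ← Real.rpow_add hq0, ← Real.rpow_add hq0]
        congr 1
        push_cast
        ring
      linear_combination
        (Pf q (-(j:ℝ)) k * Pf q b k * Pf q (e - c) k * (-1:ℝ)^k * (-1:ℝ)^t
          * gb q (j - k) t * Pf q (b + (k:ℝ)) t * Pf q (d + (k:ℝ) + (t:ℝ)) (j - k - t)
          * (gb q (k + t) k * Pf q 1 t * (Pf q 1 (k + t))⁻¹)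
          * (Pf q (e + (k:ℝ)) t * Pf q (e + (k:ℝ) + (t:ℝ)) (j - k - t))) * hpow
        + (Pf q (-(j:ℝ)) k * Pf q b k * Pf q (e - c) k * (-1:ℝ)^k * (-1:ℝ)^t
          * gb q (j - k) t * Pf q (b + (k:ℝ)) t * Pf q (d + (k:ℝ) + (t:ℝ)) (j - k - t)
          * (q ^ ((k:ℝ) * ((k:ℝ) - 1) / 2 + (1 + c) * (k:ℝ))
              * q ^ ((t:ℝ) * ((t:ℝ) - 1) / 2 + (1 - ((j:ℝ) - (k:ℝ))) * (t:ℝ)))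
          * (Pf q (e + (k:ℝ)) t * Pf q (e + (k:ℝ) + (t:ℝ)) (j - k - t))) * hfrac
        + (Pf q (-(j:ℝ)) k * Pf q b k * Pf q (e - c) k * (-1:ℝ)^k * (-1:ℝ)^t
          * gb q (j - k) t * Pf q (b + (k:ℝ)) t * Pf q (d + (k:ℝ) + (t:ℝ)) (j - k - t)
          * (q ^ ((k:ℝ) * ((k:ℝ) - 1) / 2 + (1 + c) * (k:ℝ))
              * q ^ ((t:ℝ) * ((t:ℝ) - 1) / 2 + (1 - ((j:ℝ) - (k:ℝ))) * (t:ℝ)))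
          * (Pf q 1 k)⁻¹) * hR6
    rw [Finset.sum_congr rfl hterm, ← Finset.mul_sum,
      show j + 1 - k = (j - k) + 1 by omega, V1c hq0 hq1 (j - k),
      show d + (k:ℝ) - (b + (k:ℝ)) = d - b by ring]
  rw [Finset.sum_congr rfl hinner, Finset.sum_mul, Finset.mul_sum]
  refine Finset.sum_congr rfl fun k hk => ?_
  have hkj : k ≤ j := Nat.lt_succ_iff.1 (mem_range.1 hk)
  have hsplitG : Pf q (1 + b - d - (j:ℝ)) j
      = Pf q (1 + b - d - (j:ℝ)) k * Pf q (1 + b - d - (j:ℝ) + (k:ℝ)) (j - k) := by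
    rw [← Pf_add, show k + (j - k) = j by omega]
  have hsplitD : Pf q (d - b) j
      = Pf q (d - b) (j - k) * Pf q (d - b + ((j - k : ℕ):ℝ)) k := by
    rw [← Pf_add, show (j - k) + k = j by omega]
  have hrev := Pf_reverse hq0 (d - b + ((j:ℝ) - (k:ℝ))) k
  rw [show (1:ℝ) - (d - b + ((j:ℝ) - (k:ℝ))) - (k:ℝ) = 1 + b - d - (j:ℝ) by ring] at hrev
  rw [hsplitG, hsplitD, Nat.cast_sub hkj, hrev]
  have hpw : q ^ ((k:ℝ) * ((k:ℝ) - 1) / 2 + (1 + c) * (k:ℝ)) * q ^ ((b + (k:ℝ)) * ((j:ℝ) - (k:ℝ)))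
      = q ^ (b * (j:ℝ)) * q ^ ((1 + c - d) * (k:ℝ))
        * q ^ ((k:ℝ) * (d - b + ((j:ℝ) - (k:ℝ))) + (k:ℝ) * ((k:ℝ) - 1) / 2) := by
    rw [← Real.rpow_add hq0, ← Real.rpow_add hq0, ← Real.rpow_add hq0]
    congr 1
    ring
  linear_combination (Pf q (-(j:ℝ)) k * Pf q b k * Pf q (e - c) k * (Pf q 1 k)⁻¹ * (-1:ℝ)^k
    * Pf q (e + (k:ℝ)) (j - k) * Pf q (d - b) (j - k) * Pf q (1 + b - d - (j:ℝ)) k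
    * Pf q (1 + b - d - (j:ℝ) + (k:ℝ)) (j - k)) * hpw

lemma T2c (hq0 : 0 < q) (hq1 : q < 1) (j : ℕ) (b c d e : ℝ) :
    (∑ u ∈ range (j + 1), Pf q (-(j:ℝ)) u * Pf q b u * Pf q c u / Pf q 1 u
        * q ^ ((d + e + (j:ℝ) - b - c) * (u:ℝ))
        * Pf q (d + (u:ℝ)) (j - u) * Pf q (e + (u:ℝ)) (j - u)) * Pf q (1 + b - e - (j:ℝ)) j
    = Pf q (e - b) j *
      ∑ k ∈ range (j + 1), Pf q (-(j:ℝ)) k * Pf q b k * Pf q (d - c) k / Pf q 1 k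
        * q ^ ((k:ℝ)) * Pf q (d + (k:ℝ)) (j - k)
        * Pf q (1 + b - e - (j:ℝ) + (k:ℝ)) (j - k) := by
  have hexp : ∀ u ∈ range (j + 1),
      Pf q (-(j:ℝ)) u * Pf q b u * Pf q c u / Pf q 1 u * q ^ ((d + e + (j:ℝ) - b - c) * (u:ℝ))
          * Pf q (d + (u:ℝ)) (j - u) * Pf q (e + (u:ℝ)) (j - u)
        = ∑ k ∈ range (u + 1),
            Pf q (-(j:ℝ)) u * Pf q b u / Pf q 1 u * q ^ ((d + e + (j:ℝ) - b - c) * (u:ℝ))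
              * Pf q (e + (u:ℝ)) (j - u) * Pf q (d + (u:ℝ)) (j - u)
              * (q ^ (-((d - c) * (u:ℝ))) * v1t q d (d - c) u k) := by
    intro u _
    rw [← Finset.mul_sum, ← Finset.mul_sum, V1c hq0 hq1 u d (d - c)]
    rw [show d - (d - c) = c by ring, ← mul_assoc (q ^ (-((d - c) * (u:ℝ)))),
      ← Real.rpow_add hq0, neg_add_cancel, Real.rpow_zero, one_mul]
    ring
  rw [Finset.sum_congr rfl hexp, tri_swap (j + 1)]
  have hinner : ∀ k ∈ range (j + 1),
      ∑ t ∈ range (j + 1 - k),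
        Pf q (-(j:ℝ)) (k + t) * Pf q b (k + t) / Pf q 1 (k + t)
          * q ^ ((d + e + (j:ℝ) - b - c) * ((k + t : ℕ):ℝ))
          * Pf q (e + ((k + t : ℕ):ℝ)) (j - (k + t))
          * Pf q (d + ((k + t : ℕ):ℝ)) (j - (k + t))
          * (q ^ (-((d - c) * ((k + t : ℕ):ℝ))) * v1t q d (d - c) (k + t) k)
      = (Pf q (-(j:ℝ)) k * Pf q b k * Pf q (d - c) k / Pf q 1 k * (-1) ^ k
          * q ^ ((k:ℝ) * ((k:ℝ) - 1) / 2 + (1 + (d + e + (j:ℝ) - b - c) + c - d) * (k:ℝ)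
              - (k:ℝ) * (k:ℝ) - (b + (k:ℝ)) * ((j:ℝ) - (k:ℝ)))
          * Pf q (d + (k:ℝ)) (j - k))
        * (q ^ ((b + (k:ℝ)) * (((j - k : ℕ)):ℝ)) * Pf q (e - b) (j - k)) := by
    intro k hk
    have hkj : k ≤ j := Nat.lt_succ_iff.1 (mem_range.1 hk)
    have hterm : ∀ t ∈ range (j + 1 - k),
        Pf q (-(j:ℝ)) (k + t) * Pf q b (k + t) / Pf q 1 (k + t)
          * q ^ ((d + e + (j:ℝ) - b - c) * ((k + t : ℕ):ℝ))
          * Pf q (e + ((k + t : ℕ):ℝ)) (j - (k + t))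
          * Pf q (d + ((k + t : ℕ):ℝ)) (j - (k + t))
          * (q ^ (-((d - c) * ((k + t : ℕ):ℝ))) * v1t q d (d - c) (k + t) k)
        = (Pf q (-(j:ℝ)) k * Pf q b k * Pf q (d - c) k / Pf q 1 k * (-1) ^ k
            * q ^ ((k:ℝ) * ((k:ℝ) - 1) / 2 + (1 + (d + e + (j:ℝ) - b - c) + c - d) * (k:ℝ)
                - (k:ℝ) * (k:ℝ) - (b + (k:ℝ)) * ((j:ℝ) - (k:ℝ)))
            * Pf q (d + (k:ℝ)) (j - k))
          * v2t q (e + (k:ℝ)) (b + (k:ℝ)) (j - k) t := by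
      intro t ht
      have htk : t ≤ j - k := by have := mem_range.1 ht; omega
      have hR1 : Pf q (-(j:ℝ)) (k + t) = Pf q (-(j:ℝ)) k *
          ((-1)^t * q ^ ((t:ℝ) * ((t:ℝ) - 1) / 2 - ((j:ℝ) - (k:ℝ)) * (t:ℝ)) *
            (gb q (j - k) t * Pf q 1 t)) := by
        rw [Pf_add]
        congr 1
        rw [show -(j:ℝ) + (k:ℝ) = -(((j - k : ℕ)):ℝ) by push_cast [Nat.cast_sub hkj]; ring,
          Pf_neg_nat hq0 hq1 htk, Nat.cast_sub hkj]
      have hR3 : Pf q b (k + t) = Pf q b k * Pf q (b + (k:ℝ)) t := Pf_add b k t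
      have hgb : Pf q 1 (k + t) = gb q (k + t) k * (Pf q 1 k * Pf q 1 t) := by
        rw [← gb_mul hq0 hq1 (Nat.le_add_right k t), show k + t - k = t by omega]
      simp only [v2t, v1t]
      rw [show k + t - k = t by omega, show j - (k + t) = (j - k) - t by omega,
        show d + ((k + t : ℕ):ℝ) = d + (k:ℝ) + (t:ℝ) by push_cast; ring,
        show e + ((k + t : ℕ):ℝ) = e + (k:ℝ) + (t:ℝ) by push_cast; ring,
        hR1, hR3, Nat.cast_sub hkj]
      have hR6 : Pf q (d + (k:ℝ)) t * Pf q (d + (k:ℝ) + (t:ℝ)) ((j - k) - t)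
          = Pf q (d + (k:ℝ)) (j - k) := by
        rw [← Pf_add, show t + ((j - k) - t) = j - k by omega]
      have hfrac : gb q (k + t) k * Pf q 1 t * (Pf q 1 (k + t))⁻¹ = (Pf q 1 k)⁻¹ := by
        rw [hgb]
        have h1 := Pf_one_ne_zero hq0 hq1 k
        have h2 := Pf_one_ne_zero hq0 hq1 t
        have h3 : gb q (k + t) k ≠ 0 := by
          intro h0
          apply Pf_one_ne_zero hq0 hq1 (k + t)
          rw [hgb, h0, zero_mul]
        field_simp
      have hpow : q ^ ((d + e + (j:ℝ) - b - c) * (((k + t : ℕ)):ℝ))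
            * q ^ (-((d - c) * ((k + t : ℕ):ℝ)))
            * q ^ ((k:ℝ) * ((k:ℝ) - 1) / 2 + (1 - (((k + t : ℕ)):ℝ)) * (k:ℝ))
            * q ^ ((t:ℝ) * ((t:ℝ) - 1) / 2 - ((j:ℝ) - (k:ℝ)) * (t:ℝ))
          = q ^ ((k:ℝ) * ((k:ℝ) - 1) / 2 + (1 + (d + e + (j:ℝ) - b - c) + c - d) * (k:ℝ)
                - (k:ℝ) * (k:ℝ) - (b + (k:ℝ)) * ((j:ℝ) - (k:ℝ)))
            * q ^ ((t:ℝ) * ((t:ℝ) - 1) / 2 + (e + (k:ℝ)) * (t:ℝ)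
                + (b + (k:ℝ)) * (((j:ℝ) - (k:ℝ)) - (t:ℝ))) := by
        rw [← Real.rpow_add hq0, ← Real.rpow_add hq0, ← Real.rpow_add hq0, ← Real.rpow_add hq0]
        congr 1
        push_cast
        ring
      linear_combination
        (Pf q (-(j:ℝ)) k * Pf q b k * Pf q (d - c) k * (-1:ℝ)^k * (-1:ℝ)^t
          * gb q (j - k) t * Pf q (b + (k:ℝ)) t * Pf q (e + (k:ℝ) + (t:ℝ)) (j - k - t)
          * (gb q (k + t) k * Pf q 1 t * (Pf q 1 (k + t))⁻¹)
          * (Pf q (d + (k:ℝ)) t * Pf q (d + (k:ℝ) + (t:ℝ)) (j - k - t))) * hpow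
        + (Pf q (-(j:ℝ)) k * Pf q b k * Pf q (d - c) k * (-1:ℝ)^k * (-1:ℝ)^t
          * gb q (j - k) t * Pf q (b + (k:ℝ)) t * Pf q (e + (k:ℝ) + (t:ℝ)) (j - k - t)
          * (q ^ ((k:ℝ) * ((k:ℝ) - 1) / 2 + (1 + (d + e + (j:ℝ) - b - c) + c - d) * (k:ℝ)
                - (k:ℝ) * (k:ℝ) - (b + (k:ℝ)) * ((j:ℝ) - (k:ℝ)))
              * q ^ ((t:ℝ) * ((t:ℝ) - 1) / 2 + (e + (k:ℝ)) * (t:ℝ)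
                + (b + (k:ℝ)) * (((j:ℝ) - (k:ℝ)) - (t:ℝ))))
          * (Pf q (d + (k:ℝ)) t * Pf q (d + (k:ℝ) + (t:ℝ)) (j - k - t))) * hfrac
        + (Pf q (-(j:ℝ)) k * Pf q b k * Pf q (d - c) k * (-1:ℝ)^k * (-1:ℝ)^t
          * gb q (j - k) t * Pf q (b + (k:ℝ)) t * Pf q (e + (k:ℝ) + (t:ℝ)) (j - k - t)
          * (q ^ ((k:ℝ) * ((k:ℝ) - 1) / 2 + (1 + (d + e + (j:ℝ) - b - c) + c - d) * (k:ℝ)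
                - (k:ℝ) * (k:ℝ) - (b + (k:ℝ)) * ((j:ℝ) - (k:ℝ)))
              * q ^ ((t:ℝ) * ((t:ℝ) - 1) / 2 + (e + (k:ℝ)) * (t:ℝ)
                + (b + (k:ℝ)) * (((j:ℝ) - (k:ℝ)) - (t:ℝ))))
          * (Pf q 1 k)⁻¹) * hR6
    rw [Finset.sum_congr rfl hterm, ← Finset.mul_sum,
      show j + 1 - k = (j - k) + 1 by omega, V2c hq0 hq1 (j - k),
      show e + (k:ℝ) - (b + (k:ℝ)) = e - b by ring]
  rw [Finset.sum_congr rfl hinner, Finset.sum_mul, Finset.mul_sum]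
  refine Finset.sum_congr rfl fun k hk => ?_
  have hkj : k ≤ j := Nat.lt_succ_iff.1 (mem_range.1 hk)
  have hsplitG : Pf q (1 + b - e - (j:ℝ)) j
      = Pf q (1 + b - e - (j:ℝ)) k * Pf q (1 + b - e - (j:ℝ) + (k:ℝ)) (j - k) := by
    rw [← Pf_add, show k + (j - k) = j by omega]
  have hsplitD : Pf q (e - b) j
      = Pf q (e - b) (j - k) * Pf q (e - b + ((j - k : ℕ):ℝ)) k := by
    rw [← Pf_add, show (j - k) + k = j by omega]
  have hrev := Pf_reverse hq0 (e - b + ((j:ℝ) - (k:ℝ))) k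
  rw [show (1:ℝ) - (e - b + ((j:ℝ) - (k:ℝ))) - (k:ℝ) = 1 + b - e - (j:ℝ) by ring] at hrev
  rw [hsplitG, hsplitD, Nat.cast_sub hkj, hrev]
  have hpw : q ^ ((k:ℝ) * ((k:ℝ) - 1) / 2 + (1 + (d + e + (j:ℝ) - b - c) + c - d) * (k:ℝ)
        - (k:ℝ) * (k:ℝ) - (b + (k:ℝ)) * ((j:ℝ) - (k:ℝ)))
        * q ^ ((b + (k:ℝ)) * ((j:ℝ) - (k:ℝ)))
      = q ^ ((k:ℝ))
        * q ^ ((k:ℝ) * (e - b + ((j:ℝ) - (k:ℝ))) + (k:ℝ) * ((k:ℝ) - 1) / 2) := by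
    rw [← Real.rpow_add hq0, ← Real.rpow_add hq0]
    congr 1
    ring
  linear_combination (Pf q (-(j:ℝ)) k * Pf q b k * Pf q (d - c) k * (Pf q 1 k)⁻¹ * (-1:ℝ)^k
    * Pf q (d + (k:ℝ)) (j - k) * Pf q (e - b) (j - k) * Pf q (1 + b - e - (j:ℝ)) k
    * Pf q (1 + b - e - (j:ℝ) + (k:ℝ)) (j - k)) * hpw

end ThreePhiTwo

/-- The `q`-Pochhammer symbol `(a; q)_n = ∏_{i=0}^{n-1} (1 - a qⁱ)`. -/
noncomputable def qPoch (a q : ℝ) (n : ℕ) : ℝ :=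
  ∏ i ∈ Finset.range n, (1 - a * q ^ i)

namespace ThreePhiTwo

lemma qPoch_rpow {q : ℝ} (hq0 : 0 < q) (t : ℝ) (n : ℕ) : qPoch (q ^ t) q n = Pf q t n := by
  refine Finset.prod_congr rfl fun i _ => ?_
  rw [← Real.rpow_natCast q i, ← Real.rpow_add hq0]

lemma qPoch_q {q : ℝ} (hq0 : 0 < q) (n : ℕ) : qPoch q q n = Pf q 1 n := by
  refine Finset.prod_congr rfl fun i _ => ?_
  rw [Real.rpow_add hq0, Real.rpow_one, Real.rpow_natCast]

end ThreePhiTwo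

/-- The terminating-series form of the `₃φ₂` transformation
(Lemma 3.2 of Haglund–Rhoades–Shimozono). -/
theorem three_phi_two_transformation
    (j : ℕ) (q α x y z : ℝ) (hq0 : 0 < q) (hq1 : q < 1)
    (h1 : ∀ i : ℕ, i < j → α - y - (j : ℝ) + 1 + i ≠ 0)
    (h2 : ∀ i : ℕ, i < j → α - x - (j : ℝ) + 1 + i ≠ 0)
    (h3 : ∀ i : ℕ, i < j → y + (i : ℝ) ≠ 0)
    (h4 : ∀ i : ℕ, i < j → x + (i : ℝ) ≠ 0)
    (h5 : ∀ i : ℕ, i < j → x + z + (i : ℝ) ≠ 0) :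
    ∑ u ∈ Finset.range (j + 1),
      (qPoch (q ^ (-(j : ℝ))) q u * qPoch (q ^ α) q u * qPoch (q ^ (α + z)) q u) /
        (qPoch q q u * qPoch (q ^ (α - y - (j : ℝ) + 1)) q u *
          qPoch (q ^ (α - x - (j : ℝ) + 1)) q u) * q ^ (u : ℝ)
    = (qPoch (q ^ (-y - (j : ℝ) + 1)) q j * qPoch (q ^ (-x - (j : ℝ) + 1)) q j *
          qPoch (q ^ (-x - z - (j : ℝ) + 1)) q j) /
        (qPoch (q ^ (α - y - (j : ℝ) + 1)) q j * qPoch (q ^ (α - x - (j : ℝ) + 1)) q j *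
          qPoch (q ^ y) q j) *
        q ^ ((α + x + y + z + (j : ℝ) - 1) * (j : ℝ)) *
      ∑ u ∈ Finset.range (j + 1),
        (qPoch (q ^ (-(j : ℝ))) q u * qPoch (q ^ (x + y + z + (j : ℝ) - 1)) q u *
            qPoch (q ^ (x - α)) q u) /
          (qPoch q q u * qPoch (q ^ x) q u * qPoch (q ^ (x + z)) q u) *
          q ^ ((1 + α - y) * (u : ℝ)) := by
  open ThreePhiTwo in
  simp only [qPoch_rpow hq0, qPoch_q hq0]
  -- nonvanishing facts
  have nA : Pf q (α - y - (j:ℝ) + 1) j ≠ 0 := Pf_ne_zero hq0 hq1 h1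
  have nB : Pf q (α - x - (j:ℝ) + 1) j ≠ 0 := Pf_ne_zero hq0 hq1 h2
  have ny : Pf q y j ≠ 0 := Pf_ne_zero hq0 hq1 h3
  have nx : Pf q x j ≠ 0 := Pf_ne_zero hq0 hq1 h4
  have nxz : Pf q (x + z) j ≠ 0 := Pf_ne_zero hq0 hq1 h5
  have nmy : Pf q (-y - (j:ℝ) + 1) j ≠ 0 := by
    refine Pf_ne_zero hq0 hq1 fun i hi => ?_
    have h := h3 (j - 1 - i) (by omega)
    have hc : ((j - 1 - i : ℕ) : ℝ) = (j:ℝ) - 1 - (i:ℝ) := by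
      have e1 : (j : ℕ) - 1 - i = j - (1 + i) := by omega
      rw [e1, Nat.cast_sub (by omega : 1 + i ≤ j)]
      push_cast; ring
    rw [hc] at h
    intro hcon
    exact h (by linarith)
  -- the three transformation steps
  have H1 := T1c hq0 hq1 j α (α + z) (α - y - (j:ℝ) + 1) (α - x - (j:ℝ) + 1)
  have H2 := T2c hq0 hq1 j α (-x - z - (j:ℝ) + 1) y (α - x - (j:ℝ) + 1)
  have H3 := T2c hq0 hq1 j (x + y + z + (j:ℝ) - 1) (x - α) x (x + z)
  simp only [show 1 + α - (α - y - (j:ℝ) + 1) - (j:ℝ) = y from by ring,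
    show α - y - (j:ℝ) + 1 - α = -y - (j:ℝ) + 1 from by ring,
    show α - x - (j:ℝ) + 1 - (α + z) = -x - z - (j:ℝ) + 1 from by ring,
    show 1 + (α + z) - (α - y - (j:ℝ) + 1) = y + z + (j:ℝ) from by ring] at H1
  simp only [show y + (α - x - (j:ℝ) + 1) + (j:ℝ) - α - (-x - z - (j:ℝ) + 1)
        = y + z + (j:ℝ) from by ring,
    show 1 + α - (α - x - (j:ℝ) + 1) - (j:ℝ) = x from by ring,
    show y - (-x - z - (j:ℝ) + 1) = x + y + z + (j:ℝ) - 1 from by ring,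
    show α - x - (j:ℝ) + 1 - α = -x - (j:ℝ) + 1 from by ring] at H2
  simp only [show x + (x + z) + (j:ℝ) - (x + y + z + (j:ℝ) - 1) - (x - α)
        = 1 + α - y from by ring,
    show 1 + (x + y + z + (j:ℝ) - 1) - (x + z) - (j:ℝ) = y from by ring,
    show x - (x - α) = α from by ring,
    show x + z - (x + y + z + (j:ℝ) - 1) = -y - (j:ℝ) + 1 from by ring] at H3
  -- align the middle sums
  have hS2al : (∑ u ∈ Finset.range (j + 1), Pf q (-(j:ℝ)) u * Pf q α u
          * Pf q (-x - z - (j:ℝ) + 1) u / Pf q 1 u * q ^ ((y + z + (j:ℝ)) * (u:ℝ))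
          * Pf q (y + (u:ℝ)) (j - u) * Pf q (α - x - (j:ℝ) + 1 + (u:ℝ)) (j - u))
      = ∑ k ∈ Finset.range (j + 1), Pf q (-(j:ℝ)) k * Pf q α k
          * Pf q (-x - z - (j:ℝ) + 1) k / Pf q 1 k * q ^ ((y + z + (j:ℝ)) * (k:ℝ))
          * Pf q (α - x - (j:ℝ) + 1 + (k:ℝ)) (j - k) * Pf q (y + (k:ℝ)) (j - k) :=
    Finset.sum_congr rfl fun k _ => by ring
  rw [hS2al] at H2
  have hS3al : (∑ k ∈ Finset.range (j + 1), Pf q (-(j:ℝ)) k * Pf q (x + y + z + (j:ℝ) - 1) k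
          * Pf q α k / Pf q 1 k * q ^ ((k:ℝ))
          * Pf q (x + (k:ℝ)) (j - k) * Pf q (y + (k:ℝ)) (j - k))
      = ∑ k ∈ Finset.range (j + 1), Pf q (-(j:ℝ)) k * Pf q α k
          * Pf q (x + y + z + (j:ℝ) - 1) k / Pf q 1 k * q ^ ((k:ℝ))
          * Pf q (y + (k:ℝ)) (j - k) * Pf q (x + (k:ℝ)) (j - k) :=
    Finset.sum_congr rfl fun k _ => by ring
  rw [hS3al] at H3
  -- cleared forms of the two goal sums
  have hLc : (∑ u ∈ Finset.range (j + 1),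
        Pf q (-(j:ℝ)) u * Pf q α u * Pf q (α + z) u /
          (Pf q 1 u * Pf q (α - y - (j:ℝ) + 1) u * Pf q (α - x - (j:ℝ) + 1) u) * q ^ (u:ℝ))
        * (Pf q (α - y - (j:ℝ) + 1) j * Pf q (α - x - (j:ℝ) + 1) j)
      = ∑ u ∈ Finset.range (j + 1),
        Pf q (-(j:ℝ)) u * Pf q α u * Pf q (α + z) u / Pf q 1 u * q ^ (u:ℝ) *
          Pf q (α - y - (j:ℝ) + 1 + (u:ℝ)) (j - u) * Pf q (α - x - (j:ℝ) + 1 + (u:ℝ)) (j - u) := by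
    rw [Finset.sum_mul]
    refine Finset.sum_congr rfl fun u hu => ?_
    have huj : u ≤ j := Nat.lt_succ_iff.1 (Finset.mem_range.1 hu)
    have hA : Pf q (α - y - (j:ℝ) + 1) u * Pf q (α - y - (j:ℝ) + 1 + (u:ℝ)) (j - u)
        = Pf q (α - y - (j:ℝ) + 1) j := by rw [← Pf_add, show u + (j - u) = j by omega]
    have hB : Pf q (α - x - (j:ℝ) + 1) u * Pf q (α - x - (j:ℝ) + 1 + (u:ℝ)) (j - u)
        = Pf q (α - x - (j:ℝ) + 1) j := by rw [← Pf_add, show u + (j - u) = j by omega]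
    have nAu : Pf q (α - y - (j:ℝ) + 1) u ≠ 0 :=
      Pf_ne_zero hq0 hq1 fun i hi => h1 i (by omega)
    have nBu : Pf q (α - x - (j:ℝ) + 1) u ≠ 0 :=
      Pf_ne_zero hq0 hq1 fun i hi => h2 i (by omega)
    have n1u : Pf q 1 u ≠ 0 := Pf_one_ne_zero hq0 hq1 u
    rw [← hA, ← hB]
    field_simp
  have hRc : (∑ u ∈ Finset.range (j + 1),
        Pf q (-(j:ℝ)) u * Pf q (x + y + z + (j:ℝ) - 1) u * Pf q (x - α) u /
          (Pf q 1 u * Pf q x u * Pf q (x + z) u) * q ^ ((1 + α - y) * (u:ℝ)))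
        * (Pf q x j * Pf q (x + z) j)
      = ∑ u ∈ Finset.range (j + 1),
        Pf q (-(j:ℝ)) u * Pf q (x + y + z + (j:ℝ) - 1) u * Pf q (x - α) u / Pf q 1 u *
          q ^ ((1 + α - y) * (u:ℝ)) * Pf q (x + (u:ℝ)) (j - u) * Pf q (x + z + (u:ℝ)) (j - u) := by
    rw [Finset.sum_mul]
    refine Finset.sum_congr rfl fun u hu => ?_
    have huj : u ≤ j := Nat.lt_succ_iff.1 (Finset.mem_range.1 hu)
    have hA : Pf q x u * Pf q (x + (u:ℝ)) (j - u) = Pf q x j := by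
      rw [← Pf_add, show u + (j - u) = j by omega]
    have hB : Pf q (x + z) u * Pf q (x + z + (u:ℝ)) (j - u) = Pf q (x + z) j := by
      rw [← Pf_add, show u + (j - u) = j by omega]
    have nAu : Pf q x u ≠ 0 := Pf_ne_zero hq0 hq1 fun i hi => h4 i (by omega)
    have nBu : Pf q (x + z) u ≠ 0 := Pf_ne_zero hq0 hq1 fun i hi => h5 i (by omega)
    have n1u : Pf q 1 u ≠ 0 := Pf_one_ne_zero hq0 hq1 u
    rw [← hA, ← hB]
    field_simp
  -- abbreviate the six sums
  set SL := ∑ u ∈ Finset.range (j + 1),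
      Pf q (-(j:ℝ)) u * Pf q α u * Pf q (α + z) u /
        (Pf q 1 u * Pf q (α - y - (j:ℝ) + 1) u * Pf q (α - x - (j:ℝ) + 1) u) * q ^ (u:ℝ) with hSLd
  set SR := ∑ u ∈ Finset.range (j + 1),
      Pf q (-(j:ℝ)) u * Pf q (x + y + z + (j:ℝ) - 1) u * Pf q (x - α) u /
        (Pf q 1 u * Pf q x u * Pf q (x + z) u) * q ^ ((1 + α - y) * (u:ℝ)) with hSRd
  set S1 := ∑ u ∈ Finset.range (j + 1),
      Pf q (-(j:ℝ)) u * Pf q α u * Pf q (α + z) u / Pf q 1 u * q ^ (u:ℝ) *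
        Pf q (α - y - (j:ℝ) + 1 + (u:ℝ)) (j - u) * Pf q (α - x - (j:ℝ) + 1 + (u:ℝ)) (j - u)
    with hS1d
  set S4 := ∑ u ∈ Finset.range (j + 1),
      Pf q (-(j:ℝ)) u * Pf q (x + y + z + (j:ℝ) - 1) u * Pf q (x - α) u / Pf q 1 u *
        q ^ ((1 + α - y) * (u:ℝ)) * Pf q (x + (u:ℝ)) (j - u) * Pf q (x + z + (u:ℝ)) (j - u)
    with hS4d
  -- the key chained identity
  have key : S1 * (Pf q y j * Pf q x j) =
      q ^ (α * (j:ℝ)) * Pf q (-x - (j:ℝ) + 1) j * (S4 * Pf q y j) := by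
    linear_combination (Pf q x j) * H1
      + (Pf q (-y - (j:ℝ) + 1) j * q ^ (α * (j:ℝ))) * H2
      - (q ^ (α * (j:ℝ)) * Pf q (-x - (j:ℝ) + 1) j) * H3
  have hrev1 := Pf_reverse hq0 y j
  rw [show (1:ℝ) - y - (j:ℝ) = -y - (j:ℝ) + 1 by ring] at hrev1
  have hrev2 := Pf_reverse hq0 (x + z) j
  rw [show (1:ℝ) - (x + z) - (j:ℝ) = -x - z - (j:ℝ) + 1 by ring] at hrev2
  have hsj : ((-1:ℝ)) ^ j * (-1) ^ j = 1 := by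
    rw [← pow_add]; exact Even.neg_one_pow ⟨j, rfl⟩
  have hqm : q ^ (α * (j:ℝ)) * q ^ ((j:ℝ) * y + (j:ℝ) * ((j:ℝ) - 1) / 2)
        * q ^ ((j:ℝ) * (x + z) + (j:ℝ) * ((j:ℝ) - 1) / 2)
      = q ^ ((α + x + y + z + (j:ℝ) - 1) * (j:ℝ)) := by
    rw [← Real.rpow_add hq0, ← Real.rpow_add hq0]
    congr 1
    ring
  have master : S1 * (Pf q y j * Pf q x j * Pf q (x + z) j)
      = Pf q (-y - (j:ℝ) + 1) j * Pf q (-x - (j:ℝ) + 1) j * Pf q (-x - z - (j:ℝ) + 1) j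
        * q ^ ((α + x + y + z + (j:ℝ) - 1) * (j:ℝ)) * S4 := by
    linear_combination (Pf q (x + z) j) * key
      + (q ^ (α * (j:ℝ)) * Pf q (-x - (j:ℝ) + 1) j * S4 * Pf q (x + z) j) * hrev1
      + (q ^ (α * (j:ℝ)) * Pf q (-x - (j:ℝ) + 1) j * S4 * (-1:ℝ)^j
          * q ^ ((j:ℝ) * y + (j:ℝ) * ((j:ℝ) - 1) / 2) * Pf q (-y - (j:ℝ) + 1) j) * hrev2
      + (q ^ (α * (j:ℝ)) * q ^ ((j:ℝ) * y + (j:ℝ) * ((j:ℝ) - 1) / 2)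
          * q ^ ((j:ℝ) * (x + z) + (j:ℝ) * ((j:ℝ) - 1) / 2) * Pf q (-x - (j:ℝ) + 1) j
          * Pf q (-y - (j:ℝ) + 1) j * Pf q (-x - z - (j:ℝ) + 1) j * S4) * hsj
      + (Pf q (-x - (j:ℝ) + 1) j * Pf q (-y - (j:ℝ) + 1) j
          * Pf q (-x - z - (j:ℝ) + 1) j * S4) * hqm
  -- finish by clearing denominators
  refine mul_right_cancel₀ (b := Pf q (α - y - (j:ℝ) + 1) j * Pf q (α - x - (j:ℝ) + 1) j
      * (Pf q y j * Pf q x j * Pf q (x + z) j))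
    (mul_ne_zero (mul_ne_zero nA nB) (mul_ne_zero (mul_ne_zero ny nx) nxz)) ?_
  have hPref : Pf q (-y - (j:ℝ) + 1) j * Pf q (-x - (j:ℝ) + 1) j * Pf q (-x - z - (j:ℝ) + 1) j /
        (Pf q (α - y - (j:ℝ) + 1) j * Pf q (α - x - (j:ℝ) + 1) j * Pf q y j) *
        q ^ ((α + x + y + z + (j:ℝ) - 1) * (j:ℝ)) *
        (Pf q (α - y - (j:ℝ) + 1) j * Pf q (α - x - (j:ℝ) + 1) j * Pf q y j)
      = Pf q (-y - (j:ℝ) + 1) j * Pf q (-x - (j:ℝ) + 1) j * Pf q (-x - z - (j:ℝ) + 1) j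
        * q ^ ((α + x + y + z + (j:ℝ) - 1) * (j:ℝ)) := by
    field_simp
  linear_combination (Pf q y j * Pf q x j * Pf q (x + z) j) * hLc + master
    - (Pf q (-y - (j:ℝ) + 1) j * Pf q (-x - (j:ℝ) + 1) j * Pf q (-x - z - (j:ℝ) + 1) j
        * q ^ ((α + x + y + z + (j:ℝ) - 1) * (j:ℝ))) * hRc
    - (SR * Pf q x j * Pf q (x + z) j) * hPref
end

section
/- Let $n \geq 1$ and $m \geq 0$ be integers. For every partition $\mu$ of $n$, $$m \cdot (\ell(\mu)-1) - n - b(\mu) + \binom{\ell(\mu)+1}{2} \leq m(n-1),$$ with equality if and only if $\mu = (1^n)$ is the partition of $n$ into $n$ parts equal to $1$. (This is the uniqueness-of-maximizer claim used in the paper to show that the $q$-degree of $\Delta'_{s_\nu} e_n|_{t=0}$ is $(n-1)m - b(\nu)$.) -/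
/-!
Write `k = ℓ(μ)`. Since every part is at least `1`, we have `k ≤ n` and `b(μ) ≥ ∑_{i<k} i = C(k,2)`;
with `C(k+1,2) = C(k,2) + k` the gap between the two sides becomes
`m (n - k) + (n - k) + (b(μ) - C(k,2))`, a sum of nonnegative terms. It vanishes only if `k = n`,
i.e. only if the `n` positive parts sum to `n`, which forces `μ = (1ⁿ)`; conversely `b(1ⁿ) = C(n,2)`.
-/

open Finset

theorem Finset.sum_range_id_eq_choose_two (n : ℕ) : ∑ i ∈ range n, i = n.choose 2 := by
  rw [Finset.sum_range_id, Nat.choose_two_right]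

namespace List

theorem length_le_sum_of_forall_pos {L : List ℕ} (hpos : ∀ x ∈ L, 0 < x) : L.length ≤ L.sum := by
  simpa using L.card_nsmul_le_sum 1 hpos

theorem eq_replicate_one_of_sum_eq_length {L : List ℕ} (hpos : ∀ x ∈ L, 0 < x)
    (hsum : L.sum = L.length) : L = replicate L.length 1 := by
  induction L with
  | nil => rfl
  | cons a t ih =>
    have htpos : ∀ x ∈ t, 0 < x := fun x hx => hpos x (mem_cons_of_mem a hx)
    have ht := length_le_sum_of_forall_pos htpos
    have ha := hpos a mem_cons_self
    rw [sum_cons, length_cons] at hsum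
    rw [length_cons, replicate_succ, ih htpos (by omega), show a = 1 by omega, length_replicate]

theorem choose_two_le_sum_getD_mul {L : List ℕ} (hpos : ∀ x ∈ L, 0 < x) :
    L.length.choose 2 ≤ ∑ i ∈ Finset.range L.length, L.getD i 0 * i := by
  rw [← Finset.sum_range_id_eq_choose_two]
  refine Finset.sum_le_sum fun i hi => Nat.le_mul_of_pos_left i ?_
  rw [getD_eq_getElem L 0 (Finset.mem_range.mp hi)]
  exact hpos _ (getElem_mem _)

theorem sum_getD_replicate_one_mul (n : ℕ) :
    ∑ i ∈ Finset.range n, (replicate n 1).getD i 0 * i = n.choose 2 := by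
  rw [← Finset.sum_range_id_eq_choose_two]
  refine Finset.sum_congr rfl fun i hi => ?_
  rw [getD_replicate 1 (Finset.mem_range.mp hi), one_mul]

end List

theorem degree_maximizer_general (n m : ℕ)
    (L : List ℕ) (hpos : ∀ x ∈ L, 0 < x) (hsum : L.sum = n) :
    ((m : ℤ) * ((L.length : ℤ) - 1) - (n : ℤ) -
        (∑ i ∈ Finset.range L.length, (L.getD i 0 : ℤ) * (i : ℤ)) +
        (Nat.choose (L.length + 1) 2 : ℤ) ≤ (m : ℤ) * ((n : ℤ) - 1))
    ∧ ((m : ℤ) * ((L.length : ℤ) - 1) - (n : ℤ) -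
        (∑ i ∈ Finset.range L.length, (L.getD i 0 : ℤ) * (i : ℤ)) +
        (Nat.choose (L.length + 1) 2 : ℤ) = (m : ℤ) * ((n : ℤ) - 1)
      ↔ L = List.replicate n 1) := by
  set k := L.length with hk
  have hkn : k ≤ n := hsum ▸ List.length_le_sum_of_forall_pos hpos
  have hb : (k.choose 2 : ℤ) ≤ ∑ i ∈ range k, (L.getD i 0 : ℤ) * (i : ℤ) := by
    exact_mod_cast List.choose_two_le_sum_getD_mul hpos
  have hchoose : ((k + 1).choose 2 : ℤ) = k.choose 2 + k := by
    rw [Nat.choose_succ_succ, Nat.choose_one_right]; push_cast; ring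
  have hm : (m : ℤ) * (k - 1) ≤ m * (n - 1) := by gcongr
  refine ⟨by omega, fun heq => ?_, fun hL => ?_⟩
  · have hk_eq_n : k = n := by omega
    rw [List.eq_replicate_one_of_sum_eq_length hpos (by omega), ← hk, hk_eq_n]
  · have hk_eq_n : k = n := by rw [hk, hL, List.length_replicate]
    have hbL : ∑ i ∈ range k, (L.getD i 0 : ℤ) * (i : ℤ) = k.choose 2 := by
      rw [hk_eq_n, hL]; exact_mod_cast List.sum_getD_replicate_one_mul n
    rw [hbL, hchoose, hk_eq_n]
    ring

/-- The uniqueness-of-maximizer claim used to compute the `q`-degree of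
`Δ'_{s_ν} e_n |_{t=0}`: a partition `μ ⊢ n` is represented as a weakly decreasing
list `L` of positive integers summing to `n`, `ℓ(μ) = L.length`, and
`b(μ) = ∑ᵢ μᵢ (i-1)` (indexing parts from `1`). -/
theorem degree_maximizer (n m : ℕ) (hn : 1 ≤ n)
    (L : List ℕ) (hsort : L.Pairwise (· ≥ ·)) (hpos : ∀ x ∈ L, 0 < x) (hsum : L.sum = n) :
    ((m : ℤ) * ((L.length : ℤ) - 1) - (n : ℤ) -
        (∑ i ∈ Finset.range L.length, (L.getD i 0 : ℤ) * (i : ℤ)) +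
        (Nat.choose (L.length + 1) 2 : ℤ) ≤ (m : ℤ) * ((n : ℤ) - 1))
    ∧ ((m : ℤ) * ((L.length : ℤ) - 1) - (n : ℤ) -
        (∑ i ∈ Finset.range L.length, (L.getD i 0 : ℤ) * (i : ℤ)) +
        (Nat.choose (L.length + 1) 2 : ℤ) = (m : ℤ) * ((n : ℤ) - 1)
      ↔ L = List.replicate n 1) :=
  degree_maximizer_general n m L hpos hsum
end
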